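/- Let θ be an irrational real number. Then there exist strictly increasing sequences of positive integers (k_n) and (l_n) with each k_n odd, such that for all j < n: |e^{2πi θ k_j l_n} + 1| < 2^{-n} and |e^{2πi θ k_n l_j} − 1| < 2^{-n}. -/

import Mathlib

open Complex Filter

/-!
Write `z = e^{2πiθ}`. As `θ` is irrational, the multiples of `θ` are dense in `ℝ/ℤ`, and in a
compact group the tail `(z^n)_{n ≥ N}` of an orbit accumulates at every point of the closure of
the two-sided orbit; so `z^l` comes arbitrarily close to `-1` with `l` as large as we like, and,
applying this to `2θ`, `z^k` comes arbitrarily close to `1` with `k` large and odd. Choosing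
`l_{n+1}` and `k_{n+1}` with errors below `2^{-(n+1)}/(k_n + 1)` and `2^{-(n+1)}/(l_n + 1)`,
the estimate `‖w^m - v^m‖ ≤ m ‖w - v‖` on the unit circle and `(-1)^{k_j} = -1` give the bounds
for `z^{k_j l_{n+1}}` and `z^{k_{n+1} l_j}`, `j ≤ n`.
-/

theorem norm_pow_sub_pow_le_of_norm_le_one {R : Type*} [SeminormedCommRing R] [NormOneClass R]
    {a b : R} (ha : ‖a‖ ≤ 1) (hb : ‖b‖ ≤ 1) (n : ℕ) : ‖a ^ n - b ^ n‖ ≤ n * ‖a - b‖ := by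
  induction n with
  | zero => simp
  | succ n ih =>
    calc ‖a ^ (n + 1) - b ^ (n + 1)‖ = ‖a ^ n * (a - b) + (a ^ n - b ^ n) * b‖ := by ring_nf
      _ ≤ ‖a - b‖ + n * ‖a - b‖ := by
        refine (norm_add_le _ _).trans (add_le_add ?_ ?_)
        · have hpow : ‖a ^ n‖ ≤ 1 := (norm_pow_le _ n).trans (pow_le_one₀ (norm_nonneg _) ha)
          exact (norm_mul_le _ _).trans (mul_le_of_le_one_left (norm_nonneg _) hpow)
        · exact (norm_mul_le _ _).trans (mul_le_of_le_one_right (norm_nonneg _) hb |>.trans ih)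
      _ = (n + 1 : ℕ) * ‖a - b‖ := by push_cast; ring

theorem Irrational.exists_nat_ge_norm_exp_pow_sub_lt {θ : ℝ} (hθ : Irrational θ) (t : ℝ)
    {ε : ℝ} (hε : 0 < ε) (N : ℕ) :
    ∃ n ≥ N, ‖exp (2 * Real.pi * I * θ) ^ n - exp (2 * Real.pi * I * t)‖ < ε := by
  set a : AddCircle (1 : ℝ) := ↑θ
  have hdense : DenseRange (· • a : ℤ → AddCircle (1 : ℝ)) :=
    AddCircle.denseRange_zsmul_coe_iff.2 (by simpa using hθ)
  have hcluster : MapClusterPt (t : AddCircle (1 : ℝ)) atTop (· • a : ℕ → AddCircle (1 : ℝ)) := by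
    rw [mapClusterPt_atTop_nsmul_iff_mem_topologicalClosure_zmultiples, ← SetLike.mem_coe,
      AddSubgroup.topologicalClosure_coe, AddSubgroup.coe_zmultiples, hdense.closure_range]
    trivial
  have hcont : Continuous fun x : AddCircle (1 : ℝ) ↦ (x.toCircle : ℂ) := by fun_prop
  obtain ⟨n, hnN, hn⟩ := frequently_atTop.1 (mapClusterPt_iff_frequently.1
    (hcluster.continuousAt_comp hcont.continuousAt) _ (Metric.ball_mem_nhds _ hε)) N
  refine ⟨n, hnN, ?_⟩
  simpa [a, AddCircle.toCircle_nsmul, AddCircle.toCircle_apply_mk, Circle.coe_exp, dist_eq_norm,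
    mul_comm, mul_left_comm, mul_assoc] using hn

theorem norm_exp_two_pi_I_mul_ofReal (θ : ℝ) : ‖exp (2 * Real.pi * I * θ)‖ = 1 := by
  simp [Complex.norm_exp]

theorem Irrational.exists_nat_ge_norm_exp_pow_add_one_lt {θ : ℝ} (hθ : Irrational θ)
    {ε : ℝ} (hε : 0 < ε) (N : ℕ) : ∃ l ≥ N, ‖exp (2 * Real.pi * I * θ) ^ l + 1‖ < ε := by
  have hhalf : exp (2 * Real.pi * I * (1 / 2 : ℝ)) = -1 := by
    rw [← exp_pi_mul_I]; push_cast; ring_nf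
  obtain ⟨l, hlN, hl⟩ := hθ.exists_nat_ge_norm_exp_pow_sub_lt (1 / 2) hε N
  exact ⟨l, hlN, by rwa [hhalf, sub_neg_eq_add] at hl⟩

theorem Irrational.exists_odd_ge_norm_exp_pow_sub_one_lt {θ : ℝ} (hθ : Irrational θ)
    {ε : ℝ} (hε : 0 < ε) (N : ℕ) :
    ∃ k ≥ N, Odd k ∧ ‖exp (2 * Real.pi * I * θ) ^ k - 1‖ < ε := by
  set z := exp (2 * Real.pi * I * θ)
  have h2θ : Irrational (2 * θ) := by simpa using hθ.natCast_mul (m := 2) two_ne_zero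
  obtain ⟨a, haN, ha⟩ := h2θ.exists_nat_ge_norm_exp_pow_sub_lt (-θ) hε N
  refine ⟨2 * a + 1, by omega, odd_two_mul_add_one a, ?_⟩
  have hsq : exp (2 * Real.pi * I * ((2 * θ : ℝ) : ℂ)) = z ^ 2 := by
    rw [← exp_nat_mul]; push_cast; ring_nf
  have hinv : exp (2 * Real.pi * I * ((-θ : ℝ) : ℂ)) = z⁻¹ := by
    rw [← exp_neg]; push_cast; ring_nf
  have hfactor : z ^ (2 * a + 1) - 1 = z * ((z ^ 2) ^ a - z⁻¹) := by
    have : z ≠ 0 := exp_ne_zero _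
    field_simp
    ring
  rwa [hfactor, norm_mul, norm_exp_two_pi_I_mul_ofReal, one_mul, ← hsq, ← hinv]

/-- `p = (k_n, l_n)` and `q = (k_{n+1}, l_{n+1})`; the bounds range over all `j ≤ k_n` and
`i ≤ l_n`, which covers the earlier terms of increasing sequences. -/
structure IsAlmostAnticommutingStep (z : ℂ) (ε : ℝ) (p q : ℕ × ℕ) : Prop where
  fst_lt : p.1 < q.1
  snd_lt : p.2 < q.2
  odd_fst : Odd q.1
  norm_pow_add_one_lt : ∀ j ≤ p.1, Odd j → ‖z ^ (j * q.2) + 1‖ < ε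
  norm_pow_sub_one_lt : ∀ i ≤ p.2, ‖z ^ (q.1 * i) - 1‖ < ε

theorem Irrational.exists_isAlmostAnticommutingStep {θ : ℝ} (hθ : Irrational θ) {ε : ℝ}
    (hε : 0 < ε) (p : ℕ × ℕ) :
    ∃ q, IsAlmostAnticommutingStep (exp (2 * Real.pi * I * θ)) ε p q := by
  set z := exp (2 * Real.pi * I * θ)
  obtain ⟨K, L⟩ := p
  have hz : ‖z‖ = 1 := norm_exp_two_pi_I_mul_ofReal θ
  have hpow : ∀ m, ‖z ^ m‖ ≤ 1 := fun m ↦ by rw [norm_pow, hz, one_pow]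
  have hmul : ∀ {m M : ℕ} {x : ℝ}, m ≤ M → 0 ≤ x → x < ε / (M + 1) → m * x < ε := by
    intro m M x hmM hx0 hx
    rw [lt_div_iff₀ (by positivity)] at hx
    have : (m : ℝ) ≤ M := by exact_mod_cast hmM
    nlinarith
  obtain ⟨l, hlL, hl⟩ := hθ.exists_nat_ge_norm_exp_pow_add_one_lt
    (ε := ε / (K + 1)) (by positivity) (L + 1)
  obtain ⟨k, hkK, hkodd, hk⟩ := hθ.exists_odd_ge_norm_exp_pow_sub_one_lt
    (ε := ε / (L + 1)) (by positivity) (K + 1)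
  refine ⟨(k, l), hkK, hlL, hkodd, fun j hjK hjodd ↦ ?_, fun i hiL ↦ ?_⟩
  · calc ‖z ^ (j * l) + 1‖ = ‖(z ^ l) ^ j - (-1) ^ j‖ := by
          rw [hjodd.neg_one_pow, ← pow_mul, mul_comm, sub_neg_eq_add]
      _ ≤ j * ‖z ^ l + 1‖ := by
          simpa using norm_pow_sub_pow_le_of_norm_le_one (b := -1) (hpow l) (by simp) j
      _ < ε := hmul hjK (norm_nonneg _) hl
  · calc ‖z ^ (k * i) - 1‖ = ‖(z ^ k) ^ i - 1 ^ i‖ := by rw [one_pow, ← pow_mul]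
      _ ≤ i * ‖z ^ k - 1‖ := norm_pow_sub_pow_le_of_norm_le_one (hpow k) (by simp) i
      _ < ε := hmul hiL (norm_nonneg _) hk

theorem exists_seq_of_forall_exists_step {α : Type*} (a : α) {R : ℕ → α → α → Prop}
    (h : ∀ n x, ∃ y, R n x y) : ∃ s : ℕ → α, s 0 = a ∧ ∀ n, R n (s n) (s (n + 1)) := by
  choose f hf using h
  exact ⟨fun n ↦ Nat.rec a f n, rfl, fun n ↦ hf n _⟩

theorem exists_sequences_almost_anticommuting (θ : ℝ) (hθ : Irrational θ) :
    ∃ k l : ℕ → ℕ, StrictMono k ∧ StrictMono l ∧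
      (∀ n, 0 < k n ∧ Odd (k n) ∧ 0 < l n) ∧
      ∀ n, ∀ j < n,
        ‖Complex.exp (2 * Real.pi * I * θ * (k j * l n)) + 1‖ < (2 : ℝ) ^ (-(n : ℤ)) ∧
        ‖Complex.exp (2 * Real.pi * I * θ * (k n * l j)) - 1‖ < (2 : ℝ) ^ (-(n : ℤ)) := by
  obtain ⟨s, hs0, hs⟩ := exists_seq_of_forall_exists_step (1, 1) fun n ↦
    hθ.exists_isAlmostAnticommutingStep (ε := (2 : ℝ) ^ (-((n + 1 : ℕ) : ℤ))) (by positivity)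
  set k := fun n ↦ (s n).1
  set l := fun n ↦ (s n).2
  have hk : StrictMono k := strictMono_nat_of_lt_succ fun n ↦ (hs n).fst_lt
  have hl : StrictMono l := strictMono_nat_of_lt_succ fun n ↦ (hs n).snd_lt
  have hodd : ∀ n, Odd (k n) := by
    rintro (_ | n)
    · simp [k, hs0]
    · exact (hs n).odd_fst
  have hexp : ∀ m : ℕ, exp (2 * Real.pi * I * θ * m) = exp (2 * Real.pi * I * θ) ^ m := fun m ↦ by
    rw [mul_comm, exp_nat_mul]
  refine ⟨k, l, hk, hl, fun n ↦ ⟨(hodd n).pos, hodd n, ?_⟩, ?_⟩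
  · exact (by simp [l, hs0] : 0 < l 0).trans_le (hl.monotone n.zero_le)
  rintro (_ | n) j hj
  · omega
  have hjn : j ≤ n := Nat.lt_succ_iff.1 hj
  constructor
  · rw [← Nat.cast_mul, hexp]
    exact (hs n).norm_pow_add_one_lt _ (hk.monotone hjn) (hodd j)
  · rw [← Nat.cast_mul, hexp]
    exact (hs n).norm_pow_sub_one_lt _ (hl.monotone hjn)
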